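/- arXiv:2308.09648 — 2 statements merged into one kernel-verified Lean document; each statement's English description precedes it below -/
import Mathlib

section
/- Suppose p = p_1 ⊔ p_2 and q = q_1 ⊔ q_2 are partitions of n with p_i dominating q_i for i = 1,2, and suppose that for all t, 0 ≤ (sum of first t parts of p) − (sum of first t parts of q) ≤ 1. Then for each i ∈ {1,2} and each t, 0 ≤ (sum of first t parts of p_i) − (sum of first t parts of q_i) ≤ 1. -/
/-- Sum of the `t` largest elements of a multiset of naturals. -/
def sumLargest (M : Multiset ℕ) (t : ℕ) : ℕ := (((M.sort (· ≤ ·)).reverse).take t).sum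

/-- Dominance order: for every `t`, the sum of the `t` largest parts of `M` is at least
that of `N`. -/
def Dom (M N : Multiset ℕ) : Prop := ∀ t, sumLargest N t ≤ sumLargest M t

/-!
Write `M(t)` for `sumLargest M t`, the largest sum of a sub-multiset of `M` with at most `t`
elements. Then `(A + B)(s)` is the max-plus convolution of `A(·)` and `B(·)`:
`A(a) + B(b) ≤ (A + B)(a + b)` always, and every `t` has a partner `u` with
`(A + B)(t + u) = A(t) + B(u)`. Choosing `u` for `q = q₁ + q₂` gives
`p₁(t) + p₂(u) ≤ p(t + u) ≤ q(t + u) + 1 = q₁(t) + q₂(u) + 1 ≤ q₁(t) + p₂(u) + 1`.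
-/

namespace Multiset

@[elab_as_elim]
theorem induction_on_max {α : Type*} [LinearOrder α] {p : Multiset α → Prop} (s : Multiset α)
    (zero : p 0) (cons : ∀ a s, (∀ x ∈ s, x ≤ a) → p s → p (a ::ₘ s)) : p s := by
  rcases eq_or_ne s 0 with rfl | hs
  · exact zero
  obtain ⟨a, ha, hmax⟩ := exists_max_image id hs
  rw [← cons_erase ha]
  exact cons a _ (fun x hx => hmax x (mem_of_mem_erase hx))
    (induction_on_max (s.erase a) zero cons)
termination_by card s
decreasing_by exact card_erase_lt_of_mem ha

end Multiset

open Multiset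

theorem sumLargest_eq_sum_take_sort_ge (M : Multiset ℕ) (t : ℕ) :
    sumLargest M t = ((M.sort (· ≥ ·)).take t).sum := by
  unfold sumLargest
  congr 2
  refine List.Perm.eq_of_pairwise' (r := (· ≥ ·)) ?_ ?_ ?_
  · exact List.pairwise_reverse.mpr (pairwise_sort M _)
  · exact pairwise_sort M _
  · exact coe_eq_coe.mp (by simp)

@[simp]
theorem sumLargest_zero_right (M : Multiset ℕ) : sumLargest M 0 = 0 := by
  simp [sumLargest]

@[simp]
theorem sumLargest_zero_left (t : ℕ) : sumLargest 0 t = 0 := by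
  simp [sumLargest]

theorem sumLargest_cons_succ {a : ℕ} {M : Multiset ℕ} (ha : ∀ x ∈ M, x ≤ a) (t : ℕ) :
    sumLargest (a ::ₘ M) (t + 1) = a + sumLargest M t := by
  simp only [sumLargest_eq_sum_take_sort_ge, sort_cons a M (· ≥ ·) ha, List.take_succ_cons,
    List.sum_cons]

theorem exists_le_card_le_sum_eq_sumLargest (M : Multiset ℕ) (t : ℕ) :
    ∃ S ≤ M, card S ≤ t ∧ S.sum = sumLargest M t := by
  refine ⟨(M.sort (· ≥ ·)).take t, ?_, by simp, by simp [sumLargest_eq_sum_take_sort_ge]⟩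
  calc ((M.sort (· ≥ ·)).take t : Multiset ℕ) ≤ (M.sort (· ≥ ·) : Multiset ℕ) :=
        coe_le.mpr (List.take_sublist _ _).subperm
    _ = M := sort_eq M _

theorem sum_le_sumLargest {S M : Multiset ℕ} (hS : S ≤ M) {t : ℕ} (hcard : card S ≤ t) :
    S.sum ≤ sumLargest M t := by
  induction M using Multiset.induction_on_max generalizing S t with
  | zero => simp [le_zero.mp hS]
  | cons a M hmax ih =>
    rcases eq_or_ne S 0 with rfl | hS0
    · simp
    obtain ⟨t, rfl⟩ : ∃ t', t = t' + 1 :=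
      Nat.exists_eq_add_one.mpr (lt_of_lt_of_le (card_pos.mpr hS0) hcard)
    obtain ⟨s, hsS, hsa, hle⟩ : ∃ s ∈ S, s ≤ a ∧ S.erase s ≤ M := by
      by_cases haS : a ∈ S
      · exact ⟨a, haS, le_rfl, by simpa using erase_le_erase a hS⟩
      · obtain ⟨s, hs⟩ := exists_mem_of_ne_zero hS0
        have hSM : S ≤ M := (le_cons_of_notMem haS).mp hS
        exact ⟨s, hs, hmax s (mem_of_le hSM hs), (erase_le s S).trans hSM⟩
    have hcard' : card (S.erase s) ≤ t := by
      rw [card_erase_of_mem hsS, Nat.pred_eq_sub_one]; omega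
    rw [← sum_erase hsS, sumLargest_cons_succ hmax]
    exact Nat.add_le_add hsa (ih hle hcard')

theorem sumLargest_add_sumLargest_le (A B : Multiset ℕ) (a b : ℕ) :
    sumLargest A a + sumLargest B b ≤ sumLargest (A + B) (a + b) := by
  obtain ⟨SA, hSA, hcardA, hsumA⟩ := exists_le_card_le_sum_eq_sumLargest A a
  obtain ⟨SB, hSB, hcardB, hsumB⟩ := exists_le_card_le_sum_eq_sumLargest B b
  rw [← hsumA, ← hsumB, ← sum_add]
  exact sum_le_sumLargest (add_le_add hSA hSB) (by rw [card_add]; omega)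

theorem exists_sumLargest_add_le (A B : Multiset ℕ) (t : ℕ) :
    ∃ u, sumLargest (A + B) (t + u) ≤ sumLargest A t + sumLargest B u := by
  rcases eq_or_ne (A + B) 0 with hAB | hAB
  · exact ⟨0, by simp [hAB]⟩
  rcases t with _ | t
  · exact ⟨0, by simp⟩
  obtain ⟨m, hm, hmax⟩ : ∃ m ∈ A + B, ∀ x ∈ A + B, x ≤ m := exists_max_image id hAB
  rcases mem_add.mp hm with hmA | hmB
  · obtain ⟨A, rfl⟩ : ∃ A', A = m ::ₘ A' := ⟨_, (cons_erase hmA).symm⟩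
    obtain ⟨u, hu⟩ := exists_sumLargest_add_le A B t
    refine ⟨u, ?_⟩
    rw [cons_add] at hmax ⊢
    rw [show t + 1 + u = t + u + 1 by omega,
      sumLargest_cons_succ (fun x hx => hmax x (mem_cons_of_mem hx)),
      sumLargest_cons_succ (fun x hx => hmax x (mem_cons_of_mem (mem_add.mpr (.inl hx))))]
    omega
  · obtain ⟨B, rfl⟩ : ∃ B', B = m ::ₘ B' := ⟨_, (cons_erase hmB).symm⟩
    obtain ⟨u, hu⟩ := exists_sumLargest_add_le A B (t + 1)
    refine ⟨u + 1, ?_⟩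
    rw [add_cons] at hmax ⊢
    rw [← add_assoc, sumLargest_cons_succ (fun x hx => hmax x (mem_cons_of_mem hx)),
      sumLargest_cons_succ (fun x hx => hmax x (mem_cons_of_mem (mem_add.mpr (.inr hx))))]
    omega
termination_by card A + card B

theorem sumLargest_le_add_of_add_of_dom {p₁ p₂ q₁ q₂ : Multiset ℕ} {c : ℕ} (h₂ : Dom p₂ q₂)
    (hdiff : ∀ t, sumLargest (p₁ + p₂) t ≤ sumLargest (q₁ + q₂) t + c) (t : ℕ) :
    sumLargest p₁ t ≤ sumLargest q₁ t + c := by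
  obtain ⟨u, hu⟩ := exists_sumLargest_add_le q₁ q₂ t
  have := sumLargest_add_sumLargest_le p₁ p₂ t u
  have := hdiff (t + u)
  have := h₂ u
  omega

theorem stmt_3_general (p1 p2 q1 q2 : Multiset ℕ)
    (h1 : Dom p1 q1) (h2 : Dom p2 q2)
    (hdiff : ∀ t, sumLargest (p1 + p2) t ≤ sumLargest (q1 + q2) t + 1) :
    (∀ t, sumLargest q1 t ≤ sumLargest p1 t ∧ sumLargest p1 t ≤ sumLargest q1 t + 1) ∧
    (∀ t, sumLargest q2 t ≤ sumLargest p2 t ∧ sumLargest p2 t ≤ sumLargest q2 t + 1) := by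
  refine ⟨fun t => ⟨h1 t, sumLargest_le_add_of_add_of_dom h2 hdiff t⟩,
    fun t => ⟨h2 t, sumLargest_le_add_of_add_of_dom h1 ?_ t⟩⟩
  simpa only [add_comm p2, add_comm q2] using hdiff

/-- if `p = p1 ⊔ p2` and `q = q1 ⊔ q2` are partitions of `n` with `pi ≥ qi`
for `i = 1, 2`, and all partial-sum differences of `p` over `q` lie in `{0, 1}`, then for
each `i` all partial-sum differences of `pi` over `qi` lie in `{0, 1}`. -/
theorem stmt_3 (n : ℕ) (p1 p2 q1 q2 : Multiset ℕ)
    (hp1' : 0 ∉ p1) (hq1' : 0 ∉ q1) (hp2' : 0 ∉ p2) (hq2' : 0 ∉ q2)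
    (hp : (p1 + p2).sum = n) (hq : (q1 + q2).sum = n)
    (h1 : Dom p1 q1) (h2 : Dom p2 q2)
    (hdom : Dom (p1 + p2) (q1 + q2))
    (hdiff : ∀ t, sumLargest (p1 + p2) t ≤ sumLargest (q1 + q2) t + 1) :
    (∀ t, sumLargest q1 t ≤ sumLargest p1 t ∧ sumLargest p1 t ≤ sumLargest q1 t + 1) ∧
    (∀ t, sumLargest q2 t ≤ sumLargest p2 t ∧ sumLargest p2 t ≤ sumLargest q2 t + 1) :=
  stmt_3_general p1 p2 q1 q2 h1 h2 hdiff
end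

section
/- The Barbasch-Vogan duality d_BV on type B partitions (d_BV(p) = ((p^-)_C)*) is order-reversing: if p ≥ q are partitions of 2n+1 of type B in the dominance order, then d_BV(p) ≤ d_BV(q) as partitions of 2n. -/
/-- `p` is a partition of `n`: the parts `p 0 ≥ p 1 ≥ ...` are non-increasing,
eventually zero, and sum to `n` (trailing zero padding). -/
def PartitionOf (n : ℕ) (p : ℕ → ℕ) : Prop :=
  Antitone p ∧ ∃ N, (∀ i, N ≤ i → p i = 0) ∧ ∑ i ∈ Finset.range N, p i = n

/-- Sum of the first `t` parts. -/
def psum (p : ℕ → ℕ) (t : ℕ) : ℕ := ∑ i ∈ Finset.range t, p i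

/-- Dominance order: every partial sum of `p` is at least that of `q`. -/
def Dominates (p q : ℕ → ℕ) : Prop := ∀ t, psum q t ≤ psum p t

/-- Transpose (conjugate) partition: `transpose p i = #{j : p j ≥ i + 1}` (0-indexed). -/
noncomputable def transpose (p : ℕ → ℕ) (i : ℕ) : ℕ := Set.ncard {j | i < p j}

/-- Multiplicity of the part `m` in `p`. -/
noncomputable def partMult (p : ℕ → ℕ) (m : ℕ) : ℕ := Set.ncard {i | p i = m}

/-- Type B (and type D) condition: every (positive) even part occurs with even multiplicity. -/
def TypeBseq (p : ℕ → ℕ) : Prop := ∀ m, 0 < m → Even m → Even (partMult p m)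

/-- Type C condition: every odd part occurs with even multiplicity. -/
def TypeCseq (p : ℕ → ℕ) : Prop := ∀ m, 0 < m → Odd m → Even (partMult p m)

/-- Number of (nonzero) parts of `p`: least index after which `p` vanishes. -/
noncomputable def plen (p : ℕ → ℕ) : ℕ := sInf {N | ∀ i, N ≤ i → p i = 0}

/-- `p⁻`: subtract 1 from the smallest (last nonzero) part. -/
noncomputable def pminus (p : ℕ → ℕ) : ℕ → ℕ := fun i => if i + 1 = plen p then p i - 1 else p i

/-- `p⁺`: add 1 to the largest part. -/
def pplus (p : ℕ → ℕ) : ℕ → ℕ := fun i => if i = 0 then p i + 1 else p i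

/-! The transpose turns dominance around because its partial sums are
`psum (transpose a) t = ∑ⱼ min (a j) t`, which is the minimum over `m` of
`t * m + (size of a) - psum a m`, attained at the first `m` with `a m ≤ t` when `a` is antitone.
On the other side, `q⁻ ≤ q ≤ p`, and `p⁻` agrees with `p` before its last part and has
partial sums `2n` from there on; so `(q⁻)_C` is a type C partition of `2n` below `p⁻`,
and maximality of the collapse gives `(q⁻)_C ≤ (p⁻)_C`. -/

lemma psum_mono (p : ℕ → ℕ) : Monotone (psum p) := fun _ _ h =>
  Finset.sum_le_sum_of_subset (Finset.range_subset_range.2 h)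

lemma psum_eq_psum_add_sum_Ico (p : ℕ → ℕ) {m t : ℕ} (h : m ≤ t) :
    psum p t = psum p m + ∑ i ∈ Finset.Ico m t, p i :=
  (Finset.sum_range_add_sum_Ico p h).symm

lemma psum_le_mul {p : ℕ → ℕ} {c : ℕ} (h : ∀ i, p i ≤ c) (m : ℕ) : psum p m ≤ c * m := by
  simpa [psum, mul_comm] using Finset.sum_le_card_nsmul (Finset.range m) p c fun i _ => h i

section Vanishing

variable {p : ℕ → ℕ} {N : ℕ}

lemma psum_eq_of_vanish (hN : ∀ i, N ≤ i → p i = 0) {t : ℕ} (ht : N ≤ t) :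
    psum p t = psum p N := by
  rw [psum_eq_psum_add_sum_Ico p ht, Finset.sum_eq_zero fun i hi => hN i (Finset.mem_Ico.1 hi).1,
    add_zero]

lemma psum_le_of_vanish (hN : ∀ i, N ≤ i → p i = 0) (t : ℕ) : psum p t ≤ psum p N := by
  rcases le_total t N with h | h
  · exact psum_mono p h
  · exact (psum_eq_of_vanish hN h).le

end Vanishing

lemma PartitionOf.psum_le {n : ℕ} {p : ℕ → ℕ} (hp : PartitionOf n p) (t : ℕ) : psum p t ≤ n := by
  obtain ⟨-, N, hN, hsum⟩ := hp
  exact hsum ▸ psum_le_of_vanish hN t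

section Transpose

variable {a : ℕ → ℕ} {N : ℕ}

lemma transpose_eq_card_filter (hN : ∀ i, N ≤ i → a i = 0) (i : ℕ) :
    transpose a i = ((Finset.range N).filter (fun j => i < a j)).card := by
  rw [transpose, ← Set.ncard_coe_finset]
  congr 1
  ext j
  simp only [Set.mem_ofPred_eq, Finset.coe_filter, Finset.mem_range, iff_and_self]
  intro hj
  by_contra h
  rw [hN j (not_lt.1 h)] at hj
  exact Nat.not_lt_zero i hj

lemma psum_transpose (hN : ∀ i, N ≤ i → a i = 0) (t : ℕ) :
    psum (transpose a) t = psum (fun j => min (a j) t) N := by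
  simp only [psum, transpose_eq_card_filter hN, Finset.card_filter]
  rw [Finset.sum_comm]
  refine Finset.sum_congr rfl fun j _ => ?_
  rw [← Finset.card_filter, ← Finset.card_range (min (a j) t)]
  congr 1
  ext i
  simp only [Finset.mem_filter, Finset.mem_range, lt_min_iff, and_comm]

lemma psum_min_add_psum_le (hN : ∀ i, N ≤ i → a i = 0) (t m : ℕ) :
    psum (fun j => min (a j) t) N + psum a m ≤ t * m + psum a N := by
  obtain ⟨K, hmK, hNK⟩ : ∃ K, m ≤ K ∧ N ≤ K := ⟨max m N, le_max_left m N, le_max_right m N⟩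
  have hvanish : ∀ i, N ≤ i → min (a i) t = 0 := fun i hi => by simp [hN i hi]
  have hmin : psum (fun j => min (a j) t) K
      ≤ t * m + ∑ i ∈ Finset.Ico m K, a i := by
    rw [psum_eq_psum_add_sum_Ico _ hmK]
    gcongr with i
    · exact psum_le_mul (fun i => min_le_right _ _) m
    · exact min_le_left _ _
  rw [← psum_eq_of_vanish hvanish hNK, ← psum_eq_of_vanish hN hNK, psum_eq_psum_add_sum_Ico a hmK]
  omega

lemma exists_psum_min_add_psum_eq (ha : Antitone a) (hN : ∀ i, N ≤ i → a i = 0) (t : ℕ) :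
    ∃ m, psum (fun j => min (a j) t) N + psum a m = t * m + psum a N := by
  have hex : ∃ j, a j ≤ t := ⟨N, by simp [hN N le_rfl]⟩
  refine ⟨Nat.find hex, ?_⟩
  have hmN : Nat.find hex ≤ N := Nat.find_min' hex (by simp [hN N le_rfl])
  have hhead : psum (fun j => min (a j) t) (Nat.find hex) = t * Nat.find hex := by
    rw [psum, Finset.sum_congr rfl fun j hj =>
      min_eq_right (not_le.1 (Nat.find_min hex (Finset.mem_range.1 hj))).le]
    simp [mul_comm]
  have htail : ∑ j ∈ Finset.Ico (Nat.find hex) N, min (a j) t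
      = ∑ j ∈ Finset.Ico (Nat.find hex) N, a j :=
    Finset.sum_congr rfl fun j hj =>
      min_eq_left ((ha (Finset.mem_Ico.1 hj).1).trans (Nat.find_spec hex))
  rw [psum_eq_psum_add_sum_Ico _ hmN, psum_eq_psum_add_sum_Ico a hmN, hhead, htail]
  ring

end Transpose

theorem Dominates.transpose {a b : ℕ → ℕ} {Na Nb : ℕ} (hb : Antitone b)
    (hNa : ∀ i, Na ≤ i → a i = 0) (hNb : ∀ i, Nb ≤ i → b i = 0) (hsum : psum a Na = psum b Nb)
    (hab : Dominates a b) : Dominates (transpose b) (transpose a) := by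
  intro t
  rw [psum_transpose hNa, psum_transpose hNb]
  obtain ⟨m, hm⟩ := exists_psum_min_add_psum_eq hb hNb t
  have := psum_min_add_psum_le hNa t m
  have := hab m
  omega

section Plen

variable {p : ℕ → ℕ}

lemma vanish_of_plen_le {N : ℕ} (hN : ∀ i, N ≤ i → p i = 0) : ∀ i, plen p ≤ i → p i = 0 :=
  Nat.sInf_mem (s := {M | ∀ i, M ≤ i → p i = 0}) ⟨N, hN⟩

lemma plen_le {N : ℕ} (hN : ∀ i, N ≤ i → p i = 0) : plen p ≤ N :=
  Nat.sInf_le hN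

lemma pos_of_lt_plen (hp : Antitone p) {i : ℕ} (hi : i < plen p) : 0 < p i := by
  by_contra h
  have hvanish : ∀ j, i ≤ j → p j = 0 := fun j hj => by have := hp hj; omega
  exact absurd (Nat.sInf_le hvanish : plen p ≤ i) (not_le.2 hi)

lemma pminus_le (i : ℕ) : pminus p i ≤ p i := by
  unfold pminus
  split_ifs <;> omega

lemma psum_pminus_of_lt_plen {t : ℕ} (ht : t < plen p) : psum (pminus p) t = psum p t :=
  Finset.sum_congr rfl fun i hi => if_neg (by have := Finset.mem_range.1 hi; omega)

lemma psum_pminus_add_one (hp : Antitone p) {t : ℕ} (hL : 0 < plen p) (ht : plen p ≤ t) :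
    psum (pminus p) t + 1 = psum p t := by
  have hlast : plen p - 1 ∈ Finset.range t := Finset.mem_range.2 (by omega)
  have hpos : 0 < p (plen p - 1) := pos_of_lt_plen hp (by omega)
  have hrest : ∑ i ∈ (Finset.range t).erase (plen p - 1), pminus p i
      = ∑ i ∈ (Finset.range t).erase (plen p - 1), p i :=
    Finset.sum_congr rfl fun i hi => if_neg (by have := Finset.ne_of_mem_erase hi; omega)
  have hminus : pminus p (plen p - 1) = p (plen p - 1) - 1 := if_pos (by omega)
  rw [psum, psum, ← Finset.add_sum_erase _ _ hlast, ← Finset.add_sum_erase _ _ hlast, hrest,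
    hminus]
  omega

end Plen

theorem Dominates.pminus_trans {n : ℕ} {p q c : ℕ → ℕ} (hp : PartitionOf (n + 1) p)
    (hpq : Dominates p q) (hc : ∀ t, psum c t ≤ n) (hqc : Dominates (pminus q) c) :
    Dominates (pminus p) c := by
  obtain ⟨hp_anti, N, hN, hsum⟩ := hp
  have hpsum : psum p (plen p) = n + 1 :=
    (psum_eq_of_vanish (vanish_of_plen_le hN) (plen_le hN)).symm.trans hsum
  have hL : 0 < plen p := Nat.pos_of_ne_zero fun h => by simp [h, psum] at hpsum
  intro t
  rcases lt_or_ge t (plen p) with ht | ht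
  · calc psum c t ≤ psum (pminus q) t := hqc t
      _ ≤ psum q t := Finset.sum_le_sum fun i _ => pminus_le i
      _ ≤ psum p t := hpq t
      _ = psum (pminus p) t := (psum_pminus_of_lt_plen ht).symm
  · have h := psum_pminus_add_one hp_anti hL ht
    rw [psum_eq_of_vanish (vanish_of_plen_le hN) ht, hpsum] at h
    exact (hc t).trans (by omega)

theorem stmt_13_general (n : ℕ) (p q : ℕ → ℕ)
    (hp : PartitionOf (2 * n + 1) p)
    (hdom : Dominates p q)
    (cp cq : ℕ → ℕ)
    (hcp : PartitionOf (2 * n) cp ∧ TypeCseq cp ∧ Dominates (pminus p) cp ∧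
      ∀ c', PartitionOf (2 * n) c' → TypeCseq c' → Dominates (pminus p) c' → Dominates cp c')
    (hcq : PartitionOf (2 * n) cq ∧ TypeCseq cq ∧ Dominates (pminus q) cq ∧
      ∀ c', PartitionOf (2 * n) c' → TypeCseq c' → Dominates (pminus q) c' → Dominates cq c') :
    Dominates (transpose cq) (transpose cp) := by
  obtain ⟨⟨-, Np, hNp, hsum_p⟩, -, -, hcp_max⟩ := hcp
  obtain ⟨hcq_part, hcq_C, hcq_dom, -⟩ := hcq
  have hcq_p : Dominates (pminus p) cq := hdom.pminus_trans hp hcq_part.psum_le hcq_dom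
  have hcp_cq : Dominates cp cq := hcp_max cq hcq_part hcq_C hcq_p
  obtain ⟨hcq_anti, Nq, hNq, hsum_q⟩ := hcq_part
  exact hcp_cq.transpose hcq_anti hNp hNq (hsum_p.trans hsum_q.symm)

/-- the Barbasch-Vogan duality `d_BV(p) = ((p⁻)_C)*` on type B partitions of
`2n+1` is order-reversing: if `p ≥ q` then `d_BV(p) ≤ d_BV(q)` as partitions of `2n`.
Here `cp` (resp. `cq`) is the C-collapse of `p⁻` (resp. `q⁻`). -/
theorem stmt_13 (n : ℕ) (p q : ℕ → ℕ)
    (hp : PartitionOf (2 * n + 1) p) (hpB : TypeBseq p)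
    (hq : PartitionOf (2 * n + 1) q) (hqB : TypeBseq q)
    (hdom : Dominates p q)
    (cp cq : ℕ → ℕ)
    (hcp : PartitionOf (2 * n) cp ∧ TypeCseq cp ∧ Dominates (pminus p) cp ∧
      ∀ c', PartitionOf (2 * n) c' → TypeCseq c' → Dominates (pminus p) c' → Dominates cp c')
    (hcq : PartitionOf (2 * n) cq ∧ TypeCseq cq ∧ Dominates (pminus q) cq ∧
      ∀ c', PartitionOf (2 * n) c' → TypeCseq c' → Dominates (pminus q) c' → Dominates cq c') :
    Dominates (transpose cq) (transpose cp) :=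
  stmt_13_general n p q hp hdom cp cq hcp hcq
end
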